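/- arXiv:2001.10293 — 4 statements merged into one kernel-verified Lean document; each statement's English description precedes it below -/
import Mathlib

section
/- Let V be the unique solution of the ODE V'' + |V|^{2σ} V = 0 with V(0) = 1 and V'(0) = 0, where σ > 0. Then V is a periodic function on ℝ. -/
/-!
Write the equation as `V'' = F V` with `F u = -|u|^{2σ} u`, which is odd and locally Lipschitz.
By uniqueness of solutions, `V'(0) = 0` makes `V` even, and a zero `t₁` of `V` makes it odd about
`t₁`; composing the two reflections gives `V (t + 2 t₁) = -V t`, hence period `4 t₁`.
A positive zero exists: while `V > 0` it is concave, which keeps `V > 1/2`, so `V'' ≤ F (1/2) < 0`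
and `V` would fall below `1/2` in finite time.
-/

open Set

theorem hasDerivAt_abs_rpow_mul_self {p : ℝ} (hp : 0 < p) (x : ℝ) :
    HasDerivAt (fun y : ℝ => |y| ^ p * y) ((p + 1) * |x| ^ p) x := by
  refine hasDerivAt_of_hasDerivAt_of_ne' (f := fun y : ℝ => |y| ^ p * y)
    (g := fun x => (p + 1) * |x| ^ p) (x := 0) (fun y hy => ?_)
    ((continuous_abs.rpow_const fun _ => Or.inr hp.le).mul continuous_id).continuousAt ?_ x
  · have hy' : |y| ≠ 0 := abs_ne_zero.mpr hy
    have h := ((hasDerivAt_abs hy).rpow_const (p := p) (.inl hy')).mul (hasDerivAt_id' y)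
    have hr : |y| ^ (p - 1) * |y| = |y| ^ p := by rw [← Real.rpow_add_one hy', sub_add_cancel]
    have hs : (SignType.sign y : ℝ) * y = |y| := sign_mul_self y
    refine h.congr_deriv ?_
    linear_combination (p * |y| ^ (p - 1)) * hs + p * hr
  · exact (continuous_const.mul (continuous_abs.rpow_const fun _ => Or.inr hp.le)).continuousAt

theorem contDiff_abs_rpow_mul_self {p : ℝ} (hp : 0 < p) :
    ContDiff ℝ 1 (fun y : ℝ => |y| ^ p * y) := by
  have hderiv : deriv (fun y : ℝ => |y| ^ p * y) = fun x => (p + 1) * |x| ^ p :=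
    funext fun x => (hasDerivAt_abs_rpow_mul_self hp x).deriv
  rw [contDiff_one_iff_deriv, hderiv]
  exact ⟨fun x => (hasDerivAt_abs_rpow_mul_self hp x).differentiableAt,
    continuous_const.mul (continuous_abs.rpow_const fun _ => Or.inr hp.le)⟩

theorem monotone_abs_rpow_mul_self {p : ℝ} (hp : 0 < p) :
    Monotone (fun y : ℝ => |y| ^ p * y) :=
  monotone_of_hasDerivAt_nonneg (hasDerivAt_abs_rpow_mul_self hp) fun x => by positivity

theorem ODE_solution_unique_univ_of_locallyLipschitz {E : Type*} [NormedAddCommGroup E]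
    [NormedSpace ℝ E] {v : E → E} (hv : LocallyLipschitz v) {f g : ℝ → E}
    (hf : ∀ t, HasDerivAt f (v (f t)) t) (hg : ∀ t, HasDerivAt g (v (g t)) t) {t₀ : ℝ}
    (heq : f t₀ = g t₀) : f = g := by
  ext t
  obtain ⟨A, B, ht, ht₀⟩ : ∃ A B, t ∈ Ioo A B ∧ t₀ ∈ Ioo A B :=
    ⟨min t t₀ - 1, max t t₀ + 1, by grind⟩
  have hf_cont : Continuous f := continuous_iff_continuousAt.2 fun t => (hf t).continuousAt
  have hg_cont : Continuous g := continuous_iff_continuousAt.2 fun t => (hg t).continuousAt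
  set S := f '' Icc A B ∪ g '' Icc A B
  have hS : IsCompact S :=
    (isCompact_Icc.image hf_cont).union (isCompact_Icc.image hg_cont)
  obtain ⟨K, hK⟩ := hv.locallyLipschitzOn.exists_lipschitzOnWith_of_compact hS
  exact ODE_solution_unique_of_mem_Ioo (v := fun _ => v) (s := fun _ => S) (fun _ _ => hK) ht₀
    (fun s hs => ⟨hf s, .inl ⟨s, Ioo_subset_Icc_self hs, rfl⟩⟩)
    (fun s hs => ⟨hg s, .inr ⟨s, Ioo_subset_Icc_self hs, rfl⟩⟩) heq ht

theorem image_le_of_hasDerivAt_le_of_ge {f f' B B' : ℝ → ℝ} {a : ℝ}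
    (hf : ∀ x, HasDerivAt f (f' x) x) (hB : ∀ x, HasDerivAt B (B' x) x) (ha : f a ≤ B a)
    (bound : ∀ x ≥ a, f' x ≤ B' x) : ∀ x ≥ a, f x ≤ B x := by
  intro x hx
  exact image_le_of_deriv_right_le_deriv_boundary (HasDerivAt.continuousOn fun t _ => hf t)
    (fun t _ => (hf t).hasDerivWithinAt) ha (HasDerivAt.continuousOn fun t _ => hB t)
    (fun t _ => (hB t).hasDerivWithinAt) (fun t ht => bound t ht.1) ⟨hx, le_rfl⟩

def IsNewtonSolution (F : ℝ → ℝ) (y y' : ℝ → ℝ) : Prop :=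
  ∀ t, HasDerivAt y (y' t) t ∧ HasDerivAt y' (F (y t)) t

namespace IsNewtonSolution

variable {F : ℝ → ℝ} {y y' z z' : ℝ → ℝ}

theorem continuous (hy : IsNewtonSolution F y y') : Continuous y :=
  continuous_iff_continuousAt.2 fun t => (hy t).1.continuousAt

theorem eq (hF : LocallyLipschitz F) (hy : IsNewtonSolution F y y')
    (hz : IsNewtonSolution F z z') {t₀ : ℝ} (h : y t₀ = z t₀) (h' : y' t₀ = z' t₀) : y = z := by
  have hv : LocallyLipschitz fun q : ℝ × ℝ => (q.2, F q.1) :=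
    LipschitzWith.prod_snd.locallyLipschitz.prodMk
      (hF.comp LipschitzWith.prod_fst.locallyLipschitz)
  have hyz := ODE_solution_unique_univ_of_locallyLipschitz hv
    (f := fun t => (y t, y' t)) (g := fun t => (z t, z' t))
    (fun t => (hy t).1.prodMk (hy t).2) (fun t => (hz t).1.prodMk (hz t).2) (Prod.ext h h')
  exact funext fun t => congrArg Prod.fst (congrFun hyz t)

theorem comp_const_sub (hy : IsNewtonSolution F y y') (a : ℝ) :
    IsNewtonSolution F (fun t => y (a - t)) (fun t => -y' (a - t)) := fun t => by
  have hs : HasDerivAt (fun s => a - s) (-1) t := (hasDerivAt_id' t).const_sub a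
  have hpos : HasDerivAt (fun t => y (a - t)) (y' (a - t) * -1) t := (hy (a - t)).1.comp t hs
  have hvel : HasDerivAt (fun t => -y' (a - t)) (-(F (y (a - t)) * -1)) t :=
    ((hy (a - t)).2.comp t hs).neg
  exact ⟨by simpa using hpos, by simpa using hvel⟩

theorem neg (hF : ∀ u, F (-u) = -F u) (hy : IsNewtonSolution F y y') :
    IsNewtonSolution F (-y) (-y') := fun t =>
  ⟨(hy t).1.neg, by simpa [hF] using (hy t).2.neg⟩

theorem antiperiodic (hF : LocallyLipschitz F) (hF_odd : ∀ u, F (-u) = -F u)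
    (hy : IsNewtonSolution F y y') (h0 : y' 0 = 0) {t₁ : ℝ} (h₁ : y t₁ = 0) :
    Function.Antiperiodic y (2 * t₁) := by
  have heven := (hy.comp_const_sub 0).eq hF hy (t₀ := 0) (by simp) (by simp [h0])
  have hodd := ((hy.comp_const_sub (2 * t₁)).neg hF_odd).eq hF hy (t₀ := t₁)
    (by simp [two_mul, h₁]) (by simp [two_mul])
  intro t
  have h₁ : -y (2 * t₁ - -t) = y (-t) := congrFun hodd (-t)
  have h₂ : y (0 - t) = y t := congrFun heven t
  rw [sub_neg_eq_add, add_comm] at h₁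
  rw [zero_sub] at h₂
  linarith

theorem le_of_forall_accel_le (hy : IsNewtonSolution F y y') {m : ℝ}
    (hacc : ∀ t ≥ 0, F (y t) ≤ -m) : ∀ t ≥ 0, y t ≤ y 0 + y' 0 * t - m / 2 * t ^ 2 := by
  have hvel : ∀ t ≥ 0, y' t ≤ y' 0 - m * t :=
    image_le_of_hasDerivAt_le_of_ge (fun t => (hy t).2)
      (fun t => ((hasDerivAt_id' t).const_mul m).const_sub (y' 0)) (by simp)
      fun t ht => by simpa using hacc t ht
  exact image_le_of_hasDerivAt_le_of_ge (fun t => (hy t).1)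
    (fun t => (((hasDerivAt_id' t).const_mul (y' 0)).const_add (y 0)).sub
      ((hasDerivAt_pow 2 t).const_mul (m / 2))) (by simp)
    fun t ht => by norm_num; linarith [hvel t ht]

theorem exists_pos_eq_zero (hF_anti : AntitoneOn F (Ici 0)) (hF_neg : ∀ u > 0, F u < 0)
    (hy : IsNewtonSolution F y y') (h0 : y 0 = 1) (h0' : y' 0 = 0) : ∃ t > 0, y t = 0 := by
  by_contra! hne
  have hpos : ∀ t ≥ 0, 0 < y t := by
    intro t ht
    by_contra! hle
    obtain ⟨s, hs, hys⟩ := intermediate_value_Icc' ht hy.continuous.continuousOn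
      (show (0 : ℝ) ∈ Icc (y t) (y 0) by simp [h0, hle])
    rcases hs.1.eq_or_lt with rfl | hs₀
    · simp [h0] at hys
    · exact hne s hs₀ hys
  have hconc : ConcaveOn ℝ (Ici 0) y :=
    concaveOn_of_hasDerivWithinAt2_nonpos (convex_Ici 0) hy.continuous.continuousOn
      (fun t _ => (hy t).1.hasDerivWithinAt) (fun t _ => (hy t).2.hasDerivWithinAt)
      fun t ht => (hF_neg _ (hpos t (interior_subset ht))).le
  -- concavity between `0` and `2 t` keeps `y t` above the average of `y 0 = 1` and `y (2 t) > 0`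
  have hhalf : ∀ t ≥ 0, 1 / 2 < y t := by
    intro t ht
    have hmid := hconc.2 (mem_Ici.2 le_rfl) (mem_Ici.2 (by linarith : (0 : ℝ) ≤ 2 * t))
      (by norm_num : (0 : ℝ) ≤ 1 / 2) (by norm_num : (0 : ℝ) ≤ 1 / 2) (by norm_num)
    norm_num [h0, ← mul_assoc] at hmid
    linarith [hpos (2 * t) (by linarith)]
  obtain ⟨m, hm, hacc⟩ : ∃ m > 0, ∀ t ≥ 0, F (y t) ≤ -m :=
    ⟨-F (1 / 2), neg_pos.2 (hF_neg _ (by norm_num)), fun t ht =>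
      (hF_anti (by norm_num) (hpos t ht).le (hhalf t ht).le).trans_eq (neg_neg _).symm⟩
  have hbound := hy.le_of_forall_accel_le hacc
  simp only [h0, h0', zero_mul, add_zero] at hbound
  have hmT : m * (1 + 1 / m) = m + 1 := by field_simp
  nlinarith [hbound (1 + 1 / m) (by positivity), hhalf (1 + 1 / m) (by positivity)]

end IsNewtonSolution

/-- The solution of `V'' + |V|^{2σ} V = 0`, `V(0)=1`, `V'(0)=0` (σ>0) is periodic. -/
theorem stmt_0 (σ : ℝ) (hσ : 0 < σ) (V : ℝ → ℝ)
    (hV : ContDiff ℝ 2 V)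
    (hode : ∀ t : ℝ, deriv (deriv V) t + |V t| ^ (2 * σ) * V t = 0)
    (h0 : V 0 = 1) (h0' : deriv V 0 = 0) :
    ∃ T > 0, ∀ t : ℝ, V (t + T) = V t := by
  have h2σ : 0 < 2 * σ := by positivity
  set F : ℝ → ℝ := fun u => -(|u| ^ (2 * σ) * u)
  have hV' : Differentiable ℝ (deriv V) := by
    simpa [iteratedDeriv_one] using hV.differentiable_iteratedDeriv 1 (by norm_num)
  have hsol : IsNewtonSolution F V (deriv V) := fun t =>
    ⟨(hV.differentiable (by norm_num) t).hasDerivAt,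
      by simpa only [eq_neg_of_add_eq_zero_left (hode t)] using (hV' t).hasDerivAt⟩
  have hF_lip : LocallyLipschitz F := (contDiff_abs_rpow_mul_self h2σ).neg.locallyLipschitz
  have hF_odd : ∀ u, F (-u) = -F u := fun u => by simp [F]
  have hF_anti : AntitoneOn F (Ici 0) := (monotone_abs_rpow_mul_self h2σ).neg.antitoneOn _
  have hF_neg : ∀ u > 0, F u < 0 := fun u hu => neg_neg_of_pos (by positivity)
  obtain ⟨t₁, ht₁, hVt₁⟩ := hsol.exists_pos_eq_zero hF_anti hF_neg h0 h0'
  refine ⟨2 * (2 * t₁), by positivity, ?_⟩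
  exact (hsol.antiperiodic hF_lip hF_odd h0' hVt₁).periodic_two_mul
end

section
/- Let W : ℝ → ℝ be a nontrivial continuous periodic function, σ ≥ 0, and 0 < A < B. Then there exist c > 0 and λ₀ > 0 such that for all λ ≥ λ₀, ∫_A^B |s|^{2σ} |W(λ s)|² ds ≥ c. -/
/-!
Put `g = W²`, a nonnegative continuous `T`-periodic function with positive mean `m = ∫₀ᵀ g`.
Substituting `x = λs`, `∫_A^B g(λs) ds = λ⁻¹ ∫_{λA}^{λB} g`, and the interval `[λA, λB]` contains
`⌊λ(B - A)/T⌋ ≥ λ(B - A)/(2T)` full periods, so the integral is at least `(B - A) m / (2T)` once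
`λ ≥ T/(B - A)`. On `[A, B]` the weight `|s|^{2σ}` is at least `A^{2σ}`.
-/

open MeasureTheory intervalIntegral Set Function

theorem Int.half_le_floor {x : ℝ} (hx : 1 ≤ x) : x / 2 ≤ ⌊x⌋ := by
  have h_one : (1 : ℝ) ≤ ⌊x⌋ := mod_cast Int.le_floor.mpr (by exact_mod_cast hx)
  linarith [Int.sub_one_lt_floor x]

namespace Function.Periodic

variable {g : ℝ → ℝ} {T : ℝ}

theorem intervalIntegral_pos_of_nonneg (hg : Periodic g T) (hT : 0 < T) (hc : Continuous g)
    (hnonneg : ∀ x, 0 ≤ g x) {t : ℝ} (ht : 0 < g t) : 0 < ∫ x in 0..T, g x := by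
  obtain ⟨y, hy, hgy⟩ := hg.exists_mem_Ico₀ hT t
  exact integral_pos hT hc.continuousOn (fun x _ => hnonneg x)
    ⟨y, Ico_subset_Icc_self hy, hgy ▸ ht⟩

theorem floor_mul_integral_le_of_nonneg (hg : Periodic g T) (hT : 0 < T)
    (hint : IntervalIntegrable g volume 0 T) (hnonneg : ∀ x, 0 ≤ g x) (a t : ℝ) :
    ⌊t / T⌋ * ∫ x in 0..T, g x ≤ ∫ x in a..a + t, g x := by
  have hshift : Periodic (fun x => g (x + a)) T := hg.add_const a
  have hshift_int : IntervalIntegrable (fun x => g (x + a)) volume 0 T := by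
    simpa [add_comm] using (hg.intervalIntegrable₀ hT.ne' hint a (a + T)).comp_add_right a
  have hmean : ∫ x in a..T + a, g x = ∫ x in 0..T, g x := by
    rw [add_comm, hg.intervalIntegral_add_eq a 0, zero_add]
  have hshift_integral : ∫ x in 0..t, g (x + a) = ∫ x in a..a + t, g x := by
    rw [integral_comp_add_right, zero_add, add_comm]
  have hsInf : 0 ≤ sInf ((fun t => ∫ x in 0..t, g (x + a)) '' Icc 0 T) := by
    refine Real.sInf_nonneg ?_
    rintro _ ⟨s, hs, rfl⟩
    exact integral_nonneg hs.1 fun x _ => hnonneg _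
  have key := hshift.sInf_add_zsmul_le_integral_of_pos hshift_int hT t
  rw [integral_comp_add_right, zero_add, hmean, hshift_integral, zsmul_eq_mul] at key
  linarith

theorem mul_integral_le_integral_comp_mul (hg : Periodic g T) (hT : 0 < T)
    (hint : IntervalIntegrable g volume 0 T) (hnonneg : ∀ x, 0 ≤ g x) {a b lam : ℝ}
    (hab : a < b) (hlam : T / (b - a) ≤ lam) :
    (b - a) / (2 * T) * ∫ x in 0..T, g x ≤ ∫ s in a..b, g (lam * s) := by
  have hba : 0 < b - a := sub_pos.mpr hab
  have hlam_pos : 0 < lam := (div_pos hT hba).trans_le hlam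
  have hperiods : 1 ≤ lam * (b - a) / T := by
    rwa [le_div_iff₀ hT, one_mul, ← div_le_iff₀ hba]
  have hm : 0 ≤ ∫ x in 0..T, g x := integral_nonneg hT.le fun x _ => hnonneg x
  calc (b - a) / (2 * T) * ∫ x in 0..T, g x
      = lam⁻¹ * (lam * (b - a) / T / 2 * ∫ x in 0..T, g x) := by
        field_simp
    _ ≤ lam⁻¹ * (⌊lam * (b - a) / T⌋ * ∫ x in 0..T, g x) := by
        gcongr
        exact Int.half_le_floor hperiods
    _ ≤ lam⁻¹ * ∫ x in lam * a..lam * a + lam * (b - a), g x := by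
        gcongr
        exact hg.floor_mul_integral_le_of_nonneg hT hint hnonneg _ _
    _ = ∫ s in a..b, g (lam * s) := by
        rw [integral_comp_mul_left g hlam_pos.ne', smul_eq_mul, mul_sub, add_sub_cancel]

end Function.Periodic

theorem rpow_mul_integral_le_integral_abs_rpow_mul {f : ℝ → ℝ} {a b p : ℝ} (ha : 0 ≤ a)
    (hab : a ≤ b) (hp : 0 ≤ p) (hf : IntervalIntegrable f volume a b)
    (hnonneg : ∀ x ∈ Icc a b, 0 ≤ f x) :
    a ^ p * ∫ s in a..b, f s ≤ ∫ s in a..b, |s| ^ p * f s := by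
  rw [← intervalIntegral.integral_const_mul]
  refine integral_mono_on hab (hf.const_mul _) (hf.continuousOn_mul ?_) fun s hs => ?_
  · exact (continuous_abs.rpow_const fun _ => Or.inr hp).continuousOn
  · exact mul_le_mul_of_nonneg_right (Real.rpow_le_rpow ha (hs.1.trans (le_abs_self s)) hp)
      (hnonneg s hs)

/-- Uniform lower bound for `∫_A^B |s|^{2σ}|W(λs)|² ds`. -/
theorem stmt_4 (W : ℝ → ℝ) (hW : Continuous W) (T : ℝ) (hT : 0 < T)
    (hper : Function.Periodic W T) (hnz : ∃ t, W t ≠ 0)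
    (σ : ℝ) (hσ : 0 ≤ σ) (A B : ℝ) (hA : 0 < A) (hAB : A < B) :
    ∃ c > 0, ∃ lam₀ > 0, ∀ lam : ℝ, lam₀ ≤ lam →
      c ≤ ∫ s in A..B, |s| ^ (2*σ) * (W (lam * s)) ^ 2 := by
  obtain ⟨t, ht⟩ := hnz
  set g : ℝ → ℝ := fun x => W x ^ 2
  have hg : Periodic g T := fun x => by simp only [g, hper x]
  have hgc : Continuous g := hW.pow 2
  have hg_nonneg : ∀ x, 0 ≤ g x := fun x => sq_nonneg _
  have hm : 0 < ∫ x in 0..T, g x :=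
    hg.intervalIntegral_pos_of_nonneg hT hgc hg_nonneg (by positivity)
  have hBA : 0 < B - A := sub_pos.mpr hAB
  refine ⟨A ^ (2 * σ) * ((B - A) / (2 * T) * ∫ x in 0..T, g x), by positivity,
    T / (B - A), by positivity, fun lam hlam => ?_⟩
  calc A ^ (2 * σ) * ((B - A) / (2 * T) * ∫ x in 0..T, g x)
      ≤ A ^ (2 * σ) * ∫ s in A..B, g (lam * s) := by
        gcongr
        exact hg.mul_integral_le_integral_comp_mul hT (hgc.intervalIntegrable _ _) hg_nonneg
          hAB hlam
    _ ≤ ∫ s in A..B, |s| ^ (2 * σ) * g (lam * s) :=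
        rpow_mul_integral_le_integral_abs_rpow_mul hA.le hAB.le (by positivity)
          ((hgc.comp (continuous_const_mul lam)).intervalIntegrable _ _) fun _ _ => hg_nonneg _
end

section
/- Let ψ ∈ C_c^∞(ℝ^d) with ψ(x) > 0 for all |x| < 1, and suppose there exist 0 < a < b < 1 such that ∇ψ(x) ≠ 0 for all x with a ≤ |x| ≤ b. Let W be a nontrivial continuous periodic function on ℝ, and σ ≥ 0. Then there exist c₀ > 0 and λ₀ > 0 such that for all λ ≥ λ₀, the L²(ℝ^d) norm of the function x ↦ ∇ψ(x) |ψ(x)|^σ W(λ ψ(x)) is at least c₀. -/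
open MeasureTheory intervalIntegral Set
open scoped ENNReal NNReal


lemma oneD (W : ℝ → ℝ) (hW : Continuous W) (T : ℝ) (hT : 0 < T)
    (hper : Function.Periodic (fun t => (W t)^2) T)
    (s₁ : ℝ) (hs₁ : 0 < s₁) (G G' : ℝ → ℝ)
    (hG : ∀ t ∈ Set.uIcc 0 s₁, HasDerivAt G (G' t) t)
    (hG'c : ContinuousOn G' (Set.uIcc 0 s₁))
    (c₂ C : ℝ) (hc₂ : 0 < c₂)
    (hlb : ∀ t ∈ Set.uIcc 0 s₁, c₂ ≤ G' t) (hub : ∀ t ∈ Set.uIcc 0 s₁, G' t ≤ C)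
    (lam : ℝ) (hlam : 2*T/(c₂*s₁) ≤ lam) :
    (c₂ * s₁ / (2*T*C)) * ∫ t in (0:ℝ)..T, (W t)^2 ≤ ∫ t in (0:ℝ)..s₁, (W (lam * G t))^2 := by
  have h0mem : (0:ℝ) ∈ Set.uIcc 0 s₁ := Set.left_mem_uIcc
  have hC : c₂ ≤ C := le_trans (hlb 0 h0mem) (hub 0 h0mem)
  have hCpos : 0 < C := lt_of_lt_of_le hc₂ hC
  have hlam0 : 0 < lam := lt_of_lt_of_le (by positivity) hlam
  set I := ∫ t in (0:ℝ)..T, (W t)^2 with hI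
  have hI0 : 0 ≤ I := intervalIntegral.integral_nonneg hT.le (fun t _ => sq_nonneg _)
  have hWint : ∀ t₁ t₂ : ℝ, IntervalIntegrable (fun t => (W t)^2) volume t₁ t₂ :=
    fun t₁ t₂ => ((hW.pow 2).intervalIntegrable t₁ t₂)
  have hGc : ContinuousOn G (Set.uIcc 0 s₁) :=
    fun t ht => (hG t ht).continuousAt.continuousWithinAt
  have huIcc : Set.uIcc 0 s₁ = Set.Icc 0 s₁ := Set.uIcc_of_le hs₁.le
  -- substitution
  have hsub : (∫ t in (0:ℝ)..s₁, G' t • (W (lam * G t))^2)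
      = ∫ u in (G 0)..(G s₁), (W (lam * u))^2 := by
    have := integral_comp_smul_deriv (a := 0) (b := s₁)
      (g := fun u => (W (lam * u))^2) hG hG'c (by continuity)
    simpa [Function.comp] using this
  -- upper bound by C times integral
  have hint1 : IntervalIntegrable (fun t => G' t • (W (lam * G t))^2) volume 0 s₁ := by
    apply ContinuousOn.intervalIntegrable
    exact hG'c.smul (((hW.comp (continuous_const.mul continuous_id)).comp_continuousOn hGc).pow 2)
  have hint2 : IntervalIntegrable (fun t => C * (W (lam * G t))^2) volume 0 s₁ := by
    apply ContinuousOn.intervalIntegrable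
    exact continuousOn_const.mul (((hW.comp (continuous_const.mul continuous_id)).comp_continuousOn hGc).pow 2)
  have hmono : (∫ u in (G 0)..(G s₁), (W (lam * u))^2)
      ≤ C * ∫ t in (0:ℝ)..s₁, (W (lam * G t))^2 := by
    rw [← hsub, ← intervalIntegral.integral_const_mul]
    apply intervalIntegral.integral_mono_on hs₁.le hint1 hint2
    intro t ht
    have ht' : t ∈ Set.uIcc 0 s₁ := by rw [huIcc]; exact ht
    exact mul_le_mul_of_nonneg_right (hub t ht') (sq_nonneg _)
  -- G s₁ - G 0 ≥ c₂ s₁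
  have hFTC : (∫ t in (0:ℝ)..s₁, G' t) = G s₁ - G 0 :=
    intervalIntegral.integral_eq_sub_of_hasDerivAt (fun t ht => hG t ht)
      (hG'c.intervalIntegrable)
  have hgrow : c₂ * s₁ ≤ G s₁ - G 0 := by
    rw [← hFTC]
    have : (∫ t in (0:ℝ)..s₁, c₂) ≤ ∫ t in (0:ℝ)..s₁, G' t := by
      apply intervalIntegral.integral_mono_on hs₁.le (intervalIntegrable_const)
        hG'c.intervalIntegrable
      intro t ht
      exact hlb t (by rw [huIcc]; exact ht)
    simpa [mul_comm] using this
  -- scaling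
  have hscale : (∫ u in (G 0)..(G s₁), (W (lam * u))^2)
      = lam⁻¹ * ∫ u in lam * (G 0)..(lam * G s₁), (W u)^2 := by
    rw [intervalIntegral.integral_comp_mul_left (fun u => (W u)^2) hlam0.ne']
    simp [smul_eq_mul]
  -- periodic counting
  set n : ℕ := ⌊lam * c₂ * s₁ / T⌋₊ with hn
  have hx2 : (2:ℝ) ≤ lam * c₂ * s₁ / T := by
    rw [le_div_iff₀ hT]
    have h1 : 2*T/(c₂*s₁) * (c₂ * s₁) ≤ lam * (c₂ * s₁) :=
      mul_le_mul_of_nonneg_right hlam (by positivity)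
    rw [div_mul_cancel₀] at h1
    · nlinarith
    · positivity
  have hnx : lam * c₂ * s₁ / T - 1 < (n:ℝ) := Nat.sub_one_lt_floor _
  have hnge : lam * c₂ * s₁ / (2*T) ≤ (n:ℝ) := by
    have heq : lam * c₂ * s₁ / (2*T) = (lam * c₂ * s₁ / T)/2 := by
      field_simp
    linarith
  have hnT : (n:ℝ) * T ≤ lam * c₂ * s₁ := by
    have := Nat.floor_le (by positivity : (0:ℝ) ≤ lam * c₂ * s₁ / T)
    have h2 := mul_le_mul_of_nonneg_right this hT.le
    rw [div_mul_cancel₀ _ hT.ne'] at h2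
    exact h2
  have hcount : (n:ℝ) * I ≤ ∫ u in lam * (G 0)..(lam * G s₁), (W u)^2 := by
    have hperiodic : (∫ u in lam * (G 0)..lam * G 0 + (n:ℤ) • T, (W u)^2)
        = (n:ℤ) • ∫ u in lam * (G 0)..lam * G 0 + T, (W u)^2 :=
      hper.intervalIntegral_add_zsmul_eq (n:ℤ) (lam * G 0) hWint
    have hbase : (∫ u in lam * (G 0)..lam * G 0 + T, (W u)^2) = I := by
      have := hper.intervalIntegral_add_eq (lam * G 0) 0
      simpa using this
    have hsubint : (∫ u in lam * (G 0)..lam * G 0 + (n:ℝ) * T, (W u)^2)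
        ≤ ∫ u in lam * (G 0)..(lam * G s₁), (W u)^2 := by
      apply intervalIntegral.integral_mono_interval le_rfl
        (le_add_of_nonneg_right (by positivity) : lam * G 0 ≤ lam * G 0 + (n:ℝ)*T)
        ?_ ?_ (hWint _ _)
      · have : (n:ℝ) * T ≤ lam * (G s₁ - G 0) := by
          calc (n:ℝ)*T ≤ lam * c₂ * s₁ := hnT
          _ ≤ lam * (G s₁ - G 0) := by nlinarith
        linarith [this]
      · filter_upwards with u using sq_nonneg _
    calc (n:ℝ) * I = (n:ℤ) • ∫ u in lam * (G 0)..lam * G 0 + T, (W u)^2 := by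
          rw [hbase]; simp
    _ = ∫ u in lam * (G 0)..lam * G 0 + (n:ℝ) * T, (W u)^2 := by
          rw [← hperiodic]; norm_num
    _ ≤ _ := hsubint
  -- assemble
  have key : c₂ * s₁ / (2*T) * I ≤ C * ∫ t in (0:ℝ)..s₁, (W (lam * G t))^2 := by
    calc c₂ * s₁ / (2*T) * I = lam⁻¹ * (lam * c₂ * s₁ / (2*T)) * I := by
          field_simp
    _ ≤ lam⁻¹ * (n:ℝ) * I := by
          apply mul_le_mul_of_nonneg_right _ hI0
          exact mul_le_mul_of_nonneg_left hnge (by positivity)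
    _ ≤ lam⁻¹ * ∫ u in lam * (G 0)..(lam * G s₁), (W u)^2 := by
          rw [mul_assoc]
          exact mul_le_mul_of_nonneg_left hcount (by positivity)
    _ = ∫ u in (G 0)..(G s₁), (W (lam * u))^2 := hscale.symm
    _ ≤ _ := hmono
  have h2 : c₂ * s₁ / (2*T*C) * I = (c₂ * s₁ / (2*T) * I)/C := by
    field_simp
  rw [h2, div_le_iff₀ hCpos]
  linarith [key]


lemma Ipos (W : ℝ → ℝ) (hW : Continuous W) (T : ℝ) (hT : 0 < T)
    (hper : Function.Periodic W T) (hnz : ∃ t, W t ≠ 0) :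
    0 < ∫ t in (0:ℝ)..T, (W t)^2 := by
  obtain ⟨t₀, ht₀⟩ := hnz
  have hε : 0 < (W t₀)^2 := by positivity
  have hcont : ContinuousAt (fun s => (W s)^2) t₀ := ((hW.pow 2).continuousAt)
  obtain ⟨δ, hδ, hball⟩ := Metric.continuousAt_iff.mp hcont ((W t₀)^2/2) (by linarith)
  set δ' := min (δ/2) (T/2) with hδ'
  have hδ'0 : 0 < δ' := lt_min (by linarith) (by linarith)
  have hlow : ∀ s ∈ Set.Icc (t₀ - δ') (t₀ + δ'), (W t₀)^2/2 ≤ (W s)^2 := by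
    intro s hs
    have : dist s t₀ < δ := by
      rw [Real.dist_eq]
      have h1 : δ' ≤ δ/2 := min_le_left _ _
      rw [abs_lt]
      constructor <;> [skip; skip] <;>
        · obtain ⟨h2, h3⟩ := hs; linarith
    have := hball this
    rw [Real.dist_eq, abs_lt] at this
    linarith [this.1, this.2]
  have hper2 : Function.Periodic (fun t => (W t)^2) T := fun x => by simp [hper x]
  have hWint : ∀ t₁ t₂ : ℝ, IntervalIntegrable (fun t => (W t)^2) volume t₁ t₂ :=
    fun t₁ t₂ => ((hW.pow 2).intervalIntegrable t₁ t₂)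
  have hshift : (∫ t in (0:ℝ)..T, (W t)^2) = ∫ t in (t₀ - T/2)..(t₀ + T/2), (W t)^2 := by
    have := hper2.intervalIntegral_add_eq (t₀ - T/2) 0
    simp only [zero_add] at this
    rw [← this]; ring_nf
  rw [hshift]
  have hsub : (∫ t in (t₀ - δ')..(t₀ + δ'), (W t)^2)
      ≤ ∫ t in (t₀ - T/2)..(t₀ + T/2), (W t)^2 := by
    apply intervalIntegral.integral_mono_interval
      (by have := min_le_right (δ/2) (T/2); linarith)
      (by linarith) (by have := min_le_right (δ/2) (T/2); linarith)
      (by filter_upwards with u using sq_nonneg _) (hWint _ _)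
  have hconst : (2*δ') * ((W t₀)^2/2) ≤ ∫ t in (t₀ - δ')..(t₀ + δ'), (W t)^2 := by
    have h := intervalIntegral.integral_mono_on (by linarith : t₀ - δ' ≤ t₀ + δ')
      (_root_.intervalIntegrable_const) (hWint _ _) hlow
    rw [intervalIntegral.integral_const] at h
    simp only [smul_eq_mul] at h
    calc (2*δ') * ((W t₀)^2/2) = (t₀ + δ' - (t₀ - δ')) * ((W t₀)^2/2) := by ring
    _ ≤ _ := h
  have : 0 < (2*δ') * ((W t₀)^2/2) := by positivity
  linarith

set_option maxHeartbeats 1000000 in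
/-- Uniform-in-λ positive lower bound on `‖∇ψ |ψ|^σ W(λψ)‖_{L²(ℝ^d)}`. -/
theorem stmt_5 (d : ℕ) (hd : 0 < d)
    (ψ : EuclideanSpace ℝ (Fin d) → ℝ)
    (hψ : ContDiff ℝ (⊤ : ℕ∞) ψ) (hψsupp : HasCompactSupport ψ)
    (hpos : ∀ x : EuclideanSpace ℝ (Fin d), ‖x‖ < 1 → 0 < ψ x)
    (a b : ℝ) (ha : 0 < a) (hab : a < b) (hb : b < 1)
    (hgrad : ∀ x : EuclideanSpace ℝ (Fin d), a ≤ ‖x‖ → ‖x‖ ≤ b → gradient ψ x ≠ 0)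
    (W : ℝ → ℝ) (hW : Continuous W) (T : ℝ) (hT : 0 < T)
    (hper : Function.Periodic W T) (hnz : ∃ t, W t ≠ 0)
    (σ : ℝ) (hσ : 0 ≤ σ) :
    ∃ c₀ > 0, ∃ lam₀ > 0, ∀ lam : ℝ, lam₀ ≤ lam →
      ENNReal.ofReal c₀ ≤
        eLpNorm (fun x => (|ψ x| ^ σ * W (lam * ψ x)) • gradient ψ x) 2 volume := by
  obtain ⟨n, rfl⟩ := Nat.exists_eq_succ_of_ne_zero hd.ne'
  -- basic objects
  set π : (Fin (n+1) → ℝ) → EuclideanSpace ℝ (Fin (n+1)) := ⇑(MeasurableEquiv.toLp 2 (Fin (n+1) → ℝ)) with hπ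
  have hπapp : ∀ (y : Fin (n+1) → ℝ) (i : Fin (n+1)), (π y) i = y i := fun y i => rfl
  set e₀ : EuclideanSpace ℝ (Fin (n+1)) := π (Pi.single 0 1) with he₀def
  have he₀ : ‖e₀‖ = 1 := by
    show ‖EuclideanSpace.single (0 : Fin (n+1)) (1:ℝ)‖ = 1
    rw [EuclideanSpace.norm_single]; norm_num
  set x₀ : EuclideanSpace ℝ (Fin (n+1)) := ((a+b)/2) • e₀ with hx₀def
  have hx₀ : ‖x₀‖ = (a+b)/2 := by
    rw [hx₀def, norm_smul, he₀, Real.norm_eq_abs, abs_of_pos (by linarith), mul_one]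
  have hx₀lt1 : ‖x₀‖ < 1 := by rw [hx₀]; linarith
  set v : EuclideanSpace ℝ (Fin (n+1)) := gradient ψ x₀ with hvdef
  have hv : v ≠ 0 := hgrad x₀ (by rw [hx₀]; linarith) (by rw [hx₀]; linarith)
  have hvn : 0 < ‖v‖ := norm_pos_iff.mpr hv
  set u : EuclideanSpace ℝ (Fin (n+1)) := ‖v‖⁻¹ • v with hudef
  have hu : ‖u‖ = 1 := by
    rw [hudef, norm_smul, Real.norm_eq_abs, abs_of_pos (by positivity)]
    field_simp
  set e : EuclideanSpace ℝ (Fin (n+1)) ≃ₗᵢ[ℝ] EuclideanSpace ℝ (Fin (n+1)) := Submodule.reflection (ℝ ∙ (e₀ - u))ᗮ with hedef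
  have he : e e₀ = u := Submodule.reflection_sub (by rw [he₀, hu])
  -- gradient continuity
  have hgradcont : Continuous (gradient ψ) := by
    have h1 : Continuous (fderiv ℝ ψ) := hψ.continuous_fderiv (by simp)
    exact (InnerProductSpace.toDual ℝ (EuclideanSpace ℝ (Fin (n+1)))).symm.continuous.comp h1
  set D : EuclideanSpace ℝ (Fin (n+1)) → ℝ := fun x => inner ℝ (gradient ψ x) u with hDdef
  have hDcont : Continuous D := hgradcont.inner continuous_const
  have hDx₀ : D x₀ = ‖v‖ := by
    rw [hDdef]
    simp only [hudef, ← hvdef, real_inner_smul_right, real_inner_self_eq_norm_sq]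
    field_simp
  have hDle : ∀ x, D x ≤ ‖gradient ψ x‖ := by
    intro x
    calc D x ≤ ‖gradient ψ x‖ * ‖u‖ := real_inner_le_norm _ _
    _ = ‖gradient ψ x‖ := by rw [hu, mul_one]
  -- upper bound C on ball of radius 1
  obtain ⟨xm, hxm, hCb⟩ : ∃ xm ∈ Metric.closedBall x₀ 1, ∀ y ∈ Metric.closedBall x₀ 1,
      D y ≤ D xm := by
    obtain ⟨xm, hxm, hmax⟩ := (isCompact_closedBall x₀ 1).exists_isMaxOn
      ⟨x₀, Metric.mem_closedBall_self zero_le_one⟩ hDcont.continuousOn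
    exact ⟨xm, hxm, fun y hy => hmax hy⟩
  set C : ℝ := D xm with hCdef
  have hC0 : 0 < C := lt_of_lt_of_le (hDx₀ ▸ hvn)
    (hCb x₀ (Metric.mem_closedBall_self zero_le_one))
  -- choose r
  have hψx₀ : 0 < ψ x₀ := hpos x₀ hx₀lt1
  obtain ⟨r, hr0, hr1, hrb⟩ : ∃ r : ℝ, 0 < r ∧ r ≤ 1 ∧ ∀ x ∈ Metric.closedBall x₀ r,
      ψ x₀/2 ≤ ψ x ∧ ‖v‖/2 ≤ D x := by
    have hopen : IsOpen ({x | ψ x₀/2 < ψ x} ∩ {x | ‖v‖/2 < D x}) :=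
      (isOpen_lt continuous_const (hψ.continuous)).inter (isOpen_lt continuous_const hDcont)
    have hx₀mem : x₀ ∈ ({x | ψ x₀/2 < ψ x} ∩ {x | ‖v‖/2 < D x}) := by
      constructor
      · simpa using by linarith
      · simp only [mem_setOf_eq, hDx₀]; linarith
    obtain ⟨ε, hε, hball⟩ := Metric.isOpen_iff.mp hopen x₀ hx₀mem
    refine ⟨min (ε/2) 1, by positivity, min_le_right _ _, ?_⟩
    intro x hx
    have : x ∈ Metric.ball x₀ ε := by
      rw [Metric.mem_closedBall] at hx
      rw [Metric.mem_ball]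
      have := min_le_left (ε/2) 1
      linarith
    obtain ⟨h1, h2⟩ := hball this
    exact ⟨le_of_lt h1, le_of_lt h2⟩
  -- constants and sets
  set m := ψ x₀ with hmdef
  have hm : 0 < m := hψx₀
  set s₁ := r/2 with hs₁def
  have hs₁ : 0 < s₁ := by positivity
  set ρ := r/(2*(n+1)) with hρdef
  have hρ : 0 < ρ := by positivity
  -- the parametrization
  set Ψ : ℝ × (Fin n → ℝ) → EuclideanSpace ℝ (Fin (n+1)) := fun p => x₀ + e (π (Fin.insertNth (α := fun _ : Fin (n+1) => ℝ) 0 p.1 p.2)) with hΨdef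
  have hπadd : ∀ y y' : Fin (n+1) → ℝ, π (y + y') = π y + π y' := fun _ _ => rfl
  have hπsmul : ∀ (c : ℝ) (y : Fin (n+1) → ℝ), π (c • y) = c • π y := fun _ _ => rfl
  have hins : ∀ (t : ℝ) (z : Fin n → ℝ),
      Fin.insertNth (α := fun _ : Fin (n+1) => ℝ) 0 t z = Fin.insertNth (α := fun _ : Fin (n+1) => ℝ) 0 0 z + (fun i => t * (Pi.single (0 : Fin (n+1)) (1:ℝ) : Fin (n+1) → ℝ) i) := by
    intro t z; funext i
    induction i using Fin.cases with
    | zero => simp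
    | succ j =>
      have h1 : (0 : Fin (n+1)).succAbove j = j.succ := Fin.zero_succAbove j
      rw [← h1, Pi.add_apply, Fin.insertNth_apply_succAbove, Fin.insertNth_apply_succAbove]
      rw [h1, Pi.single_eq_of_ne (Fin.succ_ne_zero j)]
      ring
  have hΨdec : ∀ (t : ℝ) (z : Fin n → ℝ), Ψ (t, z) = Ψ (0, z) + t • u := by
    intro t z
    simp only [hΨdef]
    have h2 : (fun i => t * (Pi.single (0 : Fin (n+1)) (1:ℝ) : Fin (n+1) → ℝ) i) = t • (Pi.single (0 : Fin (n+1)) (1:ℝ) : Fin (n+1) → ℝ) := rfl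
    rw [hins t z, h2, hπadd, hπsmul, _root_.map_add, LinearIsometryEquiv.map_smul]
    rw [show π (Pi.single 0 1) = e₀ from rfl, he]
    abel
  -- derivative of t ↦ ψ (Ψ (t, z))
  have hGderiv : ∀ (z : Fin n → ℝ) (t : ℝ),
      HasDerivAt (fun s => ψ (Ψ (s, z))) (D (Ψ (t, z))) t := by
    intro z t
    have hfun : (fun s => ψ (Ψ (s, z))) = fun s => ψ (Ψ (0, z) + s • u) := by
      funext s; rw [hΨdec]
    rw [hfun, show D (Ψ (t,z)) = D (Ψ (0,z) + t • u) from by rw [hΨdec]]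
    have hline : HasDerivAt (fun s : ℝ => Ψ (0, z) + s • u) u t := by
      simpa using ((hasDerivAt_id t).smul_const u).const_add (Ψ (0, z))
    have hfd : HasFDerivAt ψ
        ((InnerProductSpace.toDual ℝ (EuclideanSpace ℝ (Fin (n+1)))) (gradient ψ (Ψ (0,z) + t • u))) (Ψ (0,z) + t • u) :=
      ((hψ.differentiable (by simp)) _).hasGradientAt.hasFDerivAt
    have := hfd.comp_hasDerivAt t hline
    convert this using 1
    · rfl
    · rfl
    · rfl
    · simp [hDdef, InnerProductSpace.toDual_apply_apply]
  -- the tube stays in the good ball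
  have htube : ∀ (z : Fin n → ℝ), (∀ i, |z i| ≤ ρ) → ∀ t ∈ Icc (0:ℝ) s₁,
      Ψ (t, z) ∈ Metric.closedBall x₀ r := by
    intro z hz t ht
    rw [Metric.mem_closedBall, dist_eq_norm]
    have h1 : Ψ (t, z) - x₀ = e (π (Fin.insertNth (α := fun _ : Fin (n+1) => ℝ) 0 t z)) := by
      simp [hΨdef]
    rw [h1, e.norm_map]
    have hnorm : ‖π (Fin.insertNth (α := fun _ : Fin (n+1) => ℝ) 0 t z)‖
        = Real.sqrt (∑ i, (Fin.insertNth (α := fun _ : Fin (n+1) => ℝ) 0 t z i)^2) := by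
      rw [EuclideanSpace.norm_eq]
      congr 1
      refine Finset.sum_congr rfl fun i _ => ?_
      rw [hπapp, Real.norm_eq_abs, sq_abs]
    rw [hnorm]
    have hsum : ∑ i, (Fin.insertNth (α := fun _ : Fin (n+1) => ℝ) 0 t z i)^2
        = t^2 + ∑ j : Fin n, (z j)^2 := by
      rw [Fin.sum_univ_succAbove (fun i => (Fin.insertNth (α := fun _ : Fin (n+1) => ℝ) 0 t z i)^2) 0]
      simp
    rw [hsum]
    have ht2 : t^2 ≤ (r/2)^2 := by
      obtain ⟨ht0, ht1⟩ := ht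
      rw [hs₁def] at ht1
      exact pow_le_pow_left₀ ht0 ht1 2
    have hz2 : ∑ j : Fin n, (z j)^2 ≤ n * ρ^2 := by
      calc ∑ j : Fin n, (z j)^2 ≤ ∑ _j : Fin n, ρ^2 := by
            refine Finset.sum_le_sum fun j _ => ?_
            obtain ⟨h1, h2⟩ := abs_le.mp (hz j)
            exact sq_le_sq' h1 h2
      _ = n * ρ^2 := by
            rw [Finset.sum_const, Finset.card_univ, Fintype.card_fin, nsmul_eq_mul]
    have hρ2 : (n:ℝ) * ρ^2 ≤ (r/2)^2 := by
      have hn0 : (0:ℝ) ≤ n := Nat.cast_nonneg n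
      have key : (n:ℝ) * (r/(2*((n:ℝ)+1)))^2 ≤ (r/2)^2 := by
        rw [div_pow, div_pow, mul_div_assoc']
        rw [div_le_div_iff₀ (by positivity) (by positivity)]
        nlinarith [mul_nonneg (sq_nonneg r) hn0, mul_nonneg (mul_nonneg (sq_nonneg r) hn0) hn0, sq_nonneg r]
      rw [hρdef]; exact key
    have : t^2 + ∑ j : Fin n, (z j)^2 ≤ r^2 := by nlinarith
    calc Real.sqrt (t^2 + ∑ j : Fin n, (z j)^2) ≤ Real.sqrt (r^2) := Real.sqrt_le_sqrt this
    _ = r := Real.sqrt_sq hr0.le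
  -- measure preservation
  have mp1 : MeasurePreserving
      (fun p : ℝ × (Fin n → ℝ) => Fin.insertNth (α := fun _ : Fin (n+1) => ℝ) 0 p.1 p.2) volume volume := by
    have h := (volume_preserving_piFinSuccAbove (fun _ : Fin (n+1) => ℝ) 0).symm
    have heq : ⇑(MeasurableEquiv.piFinSuccAbove (fun _ : Fin (n+1) => ℝ) 0).symm
        = fun p : ℝ × (Fin n → ℝ) => Fin.insertNth (α := fun _ : Fin (n+1) => ℝ) 0 p.1 p.2 := by
      funext p; rfl
    rwa [heq] at h
  have mp2 : MeasurePreserving π volume volume :=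
    (EuclideanSpace.volume_preserving_symm_measurableEquiv_toLp (Fin (n+1))).symm
  have mp3 : MeasurePreserving (⇑e) volume volume := e.measurePreserving
  have mpΨ : MeasurePreserving Ψ volume volume := by
    exact MeasurePreserving.add_left volume x₀ (mp3.comp (mp2.comp mp1))
  -- 1D constants
  have hper2 : Function.Periodic (fun t => (W t)^2) T := fun x => by simp [hper x]
  set c₂ := ‖v‖/2 with hc₂def
  have hc₂ : 0 < c₂ := by positivity
  set I := ∫ t in (0:ℝ)..T, (W t)^2 with hIdef
  have hI : 0 < I := Ipos W hW T hT hper hnz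
  have hrpm : (0:ℝ) < (m/2)^σ := Real.rpow_pos_of_pos (by positivity) σ
  set K := (m/2)^σ * (‖v‖/2) with hKdef
  have hK : 0 < K := mul_pos hrpm (by positivity)
  set κ := K^2 * (c₂*s₁/(2*T*C) * I) * (2*ρ)^n with hκdef
  have hκ : 0 < κ := by positivity
  refine ⟨Real.sqrt κ, Real.sqrt_pos.mpr hκ, 2*T/(c₂*s₁), by positivity, ?_⟩
  intro lam hlam
  -- the integrand
  set f : EuclideanSpace ℝ (Fin (n+1)) → EuclideanSpace ℝ (Fin (n+1)) :=
    fun x => (|ψ x| ^ σ * W (lam * ψ x)) • gradient ψ x with hfdef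
  have hrpowc : Continuous (fun s : ℝ => s ^ σ) :=
    continuous_iff_continuousAt.mpr (fun x => Real.continuousAt_rpow_const x σ (Or.inr hσ))
  have hfc : Continuous f :=
    ((hrpowc.comp (continuous_abs.comp hψ.continuous)).mul
      (hW.comp (continuous_const.mul hψ.continuous))).smul hgradcont
  set F : EuclideanSpace ℝ (Fin (n+1)) → ℝ≥0∞ := fun x => (‖f x‖₊ : ℝ≥0∞) ^ (2:ℕ) with hFdef
  have hFm : Measurable F := (hfc.measurable.nnnorm.coe_nnreal_ennreal).pow_const 2
  -- pointwise lower bound on the tube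
  have hpt : ∀ x ∈ Metric.closedBall x₀ r,
      ENNReal.ofReal (K^2 * (W (lam * ψ x))^2) ≤ F x := by
    intro x hx
    obtain ⟨hψx, hDx⟩ := hrb x hx
    have hlow : K * |W (lam * ψ x)| ≤ ‖f x‖ := by
      have hnorm : ‖f x‖ = |ψ x| ^ σ * |W (lam * ψ x)| * ‖gradient ψ x‖ := by
        rw [hfdef]
        rw [norm_smul, Real.norm_eq_abs, abs_mul,
          abs_of_nonneg (Real.rpow_nonneg (abs_nonneg _) σ)]
      rw [hnorm, hKdef]
      have h1 : (m/2) ^ σ ≤ |ψ x| ^ σ :=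
        Real.rpow_le_rpow (by positivity) (le_trans hψx (le_abs_self _)) hσ
      have h2 : ‖v‖/2 ≤ ‖gradient ψ x‖ := le_trans hDx (hDle x)
      calc (m/2)^σ * (‖v‖/2) * |W (lam * ψ x)|
          = ((m/2)^σ * |W (lam * ψ x)|) * (‖v‖/2) := by ring
      _ ≤ (|ψ x| ^ σ * |W (lam * ψ x)|) * ‖gradient ψ x‖ := by
            apply mul_le_mul (mul_le_mul_of_nonneg_right h1 (abs_nonneg _)) h2
              (by positivity) (by positivity)
      _ = |ψ x| ^ σ * |W (lam * ψ x)| * ‖gradient ψ x‖ := by ring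
    show ENNReal.ofReal (K^2 * (W (lam * ψ x))^2) ≤ (‖f x‖₊ : ℝ≥0∞)^(2:ℕ)
    rw [← enorm_eq_nnnorm, ← ofReal_norm_eq_enorm, ← ENNReal.ofReal_pow (norm_nonneg _)]
    apply ENNReal.ofReal_le_ofReal
    have heq : (K * |W (lam * ψ x)|)^2 = K^2 * (W (lam * ψ x))^2 := by
      rw [mul_pow, sq_abs]
    rw [← heq]
    exact pow_le_pow_left₀ (by positivity) hlow 2
  -- inner (one-dimensional) estimate
  have hinner : ∀ z : Fin n → ℝ, (∀ i, |z i| ≤ ρ) →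
      ENNReal.ofReal (K^2 * (c₂*s₁/(2*T*C) * I)) ≤ ∫⁻ t, F (Ψ (t, z)) := by
    intro z hz
    set G : ℝ → ℝ := fun t => ψ (Ψ (t, z)) with hGdef
    have hGrepr : G = fun t => ψ (Ψ (0, z) + t • u) := by
      funext t; rw [hGdef]; simp only []; rw [hΨdec]
    have hGcont : Continuous G := by
      rw [hGrepr]
      exact hψ.continuous.comp (continuous_const.add (continuous_id.smul continuous_const))
    have huIcc : Set.uIcc (0:ℝ) s₁ = Set.Icc 0 s₁ := Set.uIcc_of_le hs₁.le
    have hmem : ∀ t ∈ Set.Icc (0:ℝ) s₁, Ψ (t, z) ∈ Metric.closedBall x₀ r := htube z hz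
    have hG'c : Continuous (fun t => D (Ψ (t, z))) := by
      have h3 : (fun t => D (Ψ (t, z))) = fun t => D (Ψ (0, z) + t • u) := by
        funext t; rw [hΨdec]
      rw [h3]
      exact hDcont.comp (continuous_const.add (continuous_id.smul continuous_const))
    have h1d : c₂ * s₁ / (2*T*C) * I ≤ ∫ t in (0:ℝ)..s₁, (W (lam * G t))^2 := by
      apply oneD W hW T hT hper2 s₁ hs₁ G (fun t => D (Ψ (t, z)))
        (fun t _ => hGderiv z t) hG'c.continuousOn c₂ C hc₂
        ?_ ?_ lam hlam
      · intro t ht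
        rw [huIcc] at ht
        exact (hrb _ (hmem t ht)).2
      · intro t ht
        rw [huIcc] at ht
        exact hCb _ (Metric.closedBall_subset_closedBall hr1 (hmem t ht))
    have hcont2 : Continuous (fun t => K^2 * (W (lam * G t))^2) :=
      continuous_const.mul ((hW.comp (continuous_const.mul hGcont)).pow 2)
    calc ENNReal.ofReal (K^2 * (c₂*s₁/(2*T*C) * I))
        ≤ ENNReal.ofReal (K^2 * ∫ t in (0:ℝ)..s₁, (W (lam * G t))^2) := by
          exact ENNReal.ofReal_le_ofReal (mul_le_mul_of_nonneg_left h1d (by positivity))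
    _ = ENNReal.ofReal (∫ t in (0:ℝ)..s₁, K^2 * (W (lam * G t))^2) := by
          rw [intervalIntegral.integral_const_mul]
    _ = ENNReal.ofReal (∫ t in Set.Icc (0:ℝ) s₁, K^2 * (W (lam * G t))^2) := by
          rw [intervalIntegral.integral_of_le hs₁.le, ← MeasureTheory.integral_Icc_eq_integral_Ioc]
    _ = ∫⁻ t in Set.Icc (0:ℝ) s₁, ENNReal.ofReal (K^2 * (W (lam * G t))^2) := by
          rw [MeasureTheory.ofReal_integral_eq_lintegral_ofReal
            (hcont2.integrableOn_Icc) (Filter.Eventually.of_forall (fun t => by positivity))]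
    _ ≤ ∫⁻ t in Set.Icc (0:ℝ) s₁, F (Ψ (t, z)) := by
          apply MeasureTheory.setLIntegral_mono
            (hFm.comp (mpΨ.measurable.comp (measurable_id.prodMk measurable_const)))
          intro t ht
          exact hpt _ (hmem t ht)
    _ ≤ ∫⁻ t, F (Ψ (t, z)) := MeasureTheory.setLIntegral_le_lintegral _ _
  -- outer estimate via Fubini
  have hΨFm : Measurable (fun p : ℝ × (Fin n → ℝ) => F (Ψ p)) := hFm.comp mpΨ.measurable
  have houter : ENNReal.ofReal κ ≤ ∫⁻ x, F x := by
    rw [← mpΨ.lintegral_comp hFm]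
    rw [show (volume : Measure (ℝ × (Fin n → ℝ))) = Measure.prod volume volume from
      MeasureTheory.Measure.volume_eq_prod ℝ (Fin n → ℝ)]
    rw [MeasureTheory.lintegral_prod_symm _ hΨFm.aemeasurable]
    set Q : Set (Fin n → ℝ) := Set.pi Set.univ (fun _ => Set.Icc (-ρ) ρ) with hQdef
    have hQvol : volume Q = (ENNReal.ofReal (2*ρ))^n := by
      rw [hQdef, volume_pi_pi]
      rw [show (fun i : Fin n => volume (Set.Icc (-ρ) ρ)) = fun _ => ENNReal.ofReal (2*ρ) from
        funext fun i => by rw [Real.volume_Icc]; congr 1; ring]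
      rw [Finset.prod_const, Finset.card_univ, Fintype.card_fin]
    calc ENNReal.ofReal κ
        = ENNReal.ofReal (K^2 * (c₂*s₁/(2*T*C) * I)) * (ENNReal.ofReal (2*ρ))^n := by
          rw [hκdef, ENNReal.ofReal_mul (by positivity), ENNReal.ofReal_pow (by positivity)]
    _ = ∫⁻ _z in Q, ENNReal.ofReal (K^2 * (c₂*s₁/(2*T*C) * I)) := by
          rw [MeasureTheory.setLIntegral_const, hQvol]
    _ ≤ ∫⁻ z in Q, ∫⁻ t, F (Ψ (t, z)) := by
          apply MeasureTheory.setLIntegral_mono (Measurable.lintegral_prod_left' hΨFm)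
          intro z hz
          refine hinner z fun i => ?_
          have := hz i (Set.mem_univ i)
          rw [Set.mem_Icc] at this
          exact abs_le.mpr this
    _ ≤ ∫⁻ z, ∫⁻ t, F (Ψ (t, z)) := MeasureTheory.setLIntegral_le_lintegral _ _
  -- conclude
  rw [MeasureTheory.eLpNorm_eq_lintegral_rpow_enorm_toReal (by norm_num) (by norm_num)]
  have htoReal : (2:ℝ≥0∞).toReal = (2:ℝ) := by norm_num
  rw [htoReal]
  have hFeq : (∫⁻ x, ‖f x‖ₑ ^ (2:ℝ)) = ∫⁻ x, F x := by
    refine lintegral_congr fun x => ?_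
    rw [hFdef]
    rw [show ((2:ℝ)) = ((2:ℕ):ℝ) from by norm_num, ENNReal.rpow_natCast]
    rfl
  rw [hFeq]
  calc ENNReal.ofReal (Real.sqrt κ) = (ENNReal.ofReal κ) ^ (1/2 : ℝ) := by
        rw [Real.sqrt_eq_rpow, ← ENNReal.ofReal_rpow_of_nonneg hκ.le (by norm_num)]
  _ ≤ (∫⁻ x, F x) ^ (1/2 : ℝ) := ENNReal.rpow_le_rpow houter (by norm_num)
end

section
/- Let e : [0,T] → [0,∞) be continuous with e(0) = 0, and suppose e satisfies the integral inequality e(t) ≤ α t + β ∫₀^t e(τ)(1 + e(τ)^{2σ}) dτ for constants α, β > 0 and σ > 0. If α T e^{2βT} ≤ (2βT)^{-1/(2σ)} ∧ 1 (a smallness condition ensuring e stays bounded by 1), then e(t) ≤ α t e^{2βt} for all t ∈ [0,T]. -/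
/-!
While `e ≤ 1`, the nonlinear term satisfies `e (1 + e ^ (2σ)) ≤ 2e`, so `e` obeys the linear
integral inequality `e t ≤ α t + 2β ∫₀ᵗ e`, and Grönwall's lemma applied to the right-hand side
gives `e t ≤ α t exp (2βt)`. The smallness condition makes this bound `< 1` before time `T`, so the
set of times up to which `e ≤ 1` is closed and open to the right in `[0, T]`, hence all of it.
-/

open Set Real MeasureTheory intervalIntegral Filter Topology

theorem gronwallBound_zero_le_mul_exp {K ε : ℝ} (hK : 0 ≤ K) (hε : 0 ≤ ε) (x : ℝ) :
    gronwallBound 0 K ε x ≤ ε * x * exp (K * x) := by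
  rcases hK.eq_or_lt with rfl | hK
  · simp [gronwallBound_K0]
  simp only [gronwallBound_of_K_ne_0 hK.ne', zero_mul, zero_add]
  have hexp : exp (K * x) - 1 ≤ K * x * exp (K * x) := by
    have h := mul_le_mul_of_nonneg_right (one_sub_le_exp_neg (K * x)) (exp_pos (K * x)).le
    rw [← exp_add, neg_add_cancel, exp_zero] at h
    linarith
  calc ε / K * (exp (K * x) - 1) ≤ ε / K * (K * x * exp (K * x)) := by gcongr
    _ = ε * x * exp (K * x) := by field_simp

theorem ContinuousOn.hasDerivWithinAt_integral_Ici {u : ℝ → ℝ} {a b x : ℝ}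
    (hu : ContinuousOn u (Icc a b)) (hx : x ∈ Ico a b) :
    HasDerivWithinAt (fun t => ∫ τ in a..t, u τ) (u x) (Ici x) x := by
  have hIcc : Icc a b ∈ 𝓝[>] x :=
    mem_of_superset (Ioc_mem_nhdsGT hx.2) fun y hy => ⟨hx.1.trans hy.1.le, hy.2⟩
  refine integral_hasDerivWithinAt_right ?_ ?_
    ((hu x (Ico_subset_Icc_self hx)).mono_of_mem_nhdsWithin hIcc)
  · exact (hu.mono (Icc_subset_Icc_right hx.2.le)).intervalIntegrable_of_Icc hx.1
  · exact (hu.stronglyMeasurableAtFilter_nhdsWithin measurableSet_Icc x).filter_mono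
      (nhdsWithin_le_of_mem hIcc)

theorem le_mul_exp_of_le_add_mul_integral {u : ℝ → ℝ} {α K a : ℝ} (hα : 0 ≤ α) (hK : 0 ≤ K)
    (hu : ContinuousOn u (Icc 0 a))
    (h : ∀ t ∈ Icc 0 a, u t ≤ α * t + K * ∫ τ in (0:ℝ)..t, u τ) :
    ∀ t ∈ Icc 0 a, u t ≤ α * t * exp (K * t) := by
  set g : ℝ → ℝ := fun t => α * t + K * ∫ τ in (0:ℝ)..t, u τ
  have hg_cont : ContinuousOn g (Icc 0 a) := by
    rcases le_or_gt 0 a with ha | ha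
    · refine (continuousOn_const.mul continuousOn_id).add (continuousOn_const.mul ?_)
      have := continuousOn_primitive_interval (μ := volume) (a := 0) (b := a) (f := u)
        (by rw [uIcc_of_le ha]; exact hu.integrableOn_Icc)
      rwa [uIcc_of_le ha] at this
    · simp [Icc_eq_empty_of_lt ha]
  have hg_deriv : ∀ x ∈ Ico 0 a, HasDerivWithinAt g (α + K * u x) (Ici x) x := fun x hx =>
    ((hasDerivWithinAt_id x _).const_mul α |>.congr_deriv (mul_one α)).add
      ((hu.hasDerivWithinAt_integral_Ici hx).const_mul K)
  have hg_le : ∀ t ∈ Icc 0 a, g t ≤ gronwallBound 0 K α t := by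
    simpa using le_gronwallBound_of_liminf_deriv_right_le hg_cont
      (fun x hx _ hr => (hg_deriv x hx).liminf_right_slope_le hr) (by simp [g])
      fun x hx => by
        have := mul_le_mul_of_nonneg_left (h x (Ico_subset_Icc_self hx)) hK
        linarith
  exact fun t ht => (h t ht).trans <| (hg_le t ht).trans (gronwallBound_zero_le_mul_exp hK hα t)

theorem isClosed_setOf_forall_mem_Ico {α : Type*} [LinearOrder α] [TopologicalSpace α]
    [ClosedIicTopology α] (a : α) (p : α → Prop) : IsClosed {t | ∀ τ ∈ Ico a t, p τ} := by
  have : {t | ∀ τ ∈ Ico a t, p τ} = ⋂ τ ∈ {τ | a ≤ τ ∧ ¬p τ}, Iic τ := by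
    ext t
    simp only [mem_ofPred_eq, mem_Ico, mem_iInter, mem_Iic, and_imp]
    exact forall_congr' fun τ => ⟨fun h ha hp => not_lt.1 fun ht => hp (h ha ht),
      fun h ha ht => by_contra fun hp => (h ha hp).not_gt ht⟩
  rw [this]
  exact isClosed_biInter fun _ _ => isClosed_Iic

theorem ContinuousOn.forall_Ico_le_of_forall_Ico_le_imp_lt {α β : Type*}
    [ConditionallyCompleteLinearOrder α] [TopologicalSpace α] [OrderTopology α]
    [DenselyOrdered α] [LinearOrder β] [TopologicalSpace β] [OrderClosedTopology β]
    {f : α → β} {a b : α} {c : β} (hf : ContinuousOn f (Icc a b))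
    (hstep : ∀ x ∈ Ico a b, (∀ τ ∈ Ico a x, f τ ≤ c) → f x < c) :
    ∀ x ∈ Icc a b, ∀ τ ∈ Ico a x, f τ ≤ c := by
  refine ((isClosed_setOf_forall_mem_Ico a _).inter isClosed_Icc).Icc_subset_of_forall_mem_nhdsWithin
    (fun τ hτ => (hτ.1.not_gt hτ.2).elim) ?_
  rintro x ⟨hxS, hx⟩
  have hlt : {y | f y < c} ∈ 𝓝[≥] x :=
    (hf x (Ico_subset_Icc_self hx)).eventually_lt_const (hstep x hx hxS)
      |>.filter_mono (nhdsWithin_le_of_mem (mem_of_superset (Icc_mem_nhdsGE hx.2)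
        (Icc_subset_Icc_left hx.1)))
  obtain ⟨u, hu, hIco⟩ := (mem_nhdsGE_iff_exists_Ico_subset' hx.2).1 hlt
  refine mem_of_superset (Ioc_mem_nhdsGT hu) fun y hy τ hτ => ?_
  rcases lt_or_ge τ x with hτx | hxτ
  · exact hxS τ ⟨hτ.1, hτx⟩
  · exact (hIco ⟨hxτ, hτ.2.trans_le hy.2⟩).le

theorem integral_mul_one_add_rpow_le {e : ℝ → ℝ} {p t : ℝ} (hp : 0 ≤ p) (ht : 0 ≤ t)
    (hcont : ContinuousOn e (Icc 0 t)) (hnonneg : ∀ τ ∈ Icc 0 t, 0 ≤ e τ)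
    (hle : ∀ τ ∈ Ioo 0 t, e τ ≤ 1) :
    ∫ τ in (0:ℝ)..t, e τ * (1 + e τ ^ p) ≤ ∫ τ in (0:ℝ)..t, 2 * e τ := by
  refine integral_mono_on_of_le_Ioo ht ?_ ?_ fun τ hτ => ?_
  · exact (hcont.mul (continuousOn_const.add (hcont.rpow_const fun _ _ => Or.inr hp)))
      |>.intervalIntegrable_of_Icc ht
  · exact (continuousOn_const.mul hcont).intervalIntegrable_of_Icc ht
  · have he := hnonneg τ (Ioo_subset_Icc_self hτ)
    have := rpow_le_one he (hle τ hτ) hp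
    nlinarith

theorem le_mul_exp_of_forall_Ico_le_one {T α β p t₀ : ℝ} (hα : 0 ≤ α) (hβ : 0 ≤ β) (hp : 0 ≤ p)
    {e : ℝ → ℝ} (hcont : ContinuousOn e (Icc 0 T)) (hnonneg : ∀ t ∈ Icc 0 T, 0 ≤ e t)
    (hineq : ∀ t ∈ Icc 0 T, e t ≤ α * t + β * ∫ τ in (0:ℝ)..t, e τ * (1 + e τ ^ p))
    (ht₀ : t₀ ∈ Icc 0 T) (hle : ∀ τ ∈ Ico 0 t₀, e τ ≤ 1) :
    e t₀ ≤ α * t₀ * exp (2 * β * t₀) := by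
  have hsub : Icc 0 t₀ ⊆ Icc 0 T := Icc_subset_Icc_right ht₀.2
  refine le_mul_exp_of_le_add_mul_integral hα (by positivity) (hcont.mono hsub) (fun t ht => ?_)
    t₀ (right_mem_Icc.2 ht₀.1)
  have hsub' : Icc 0 t ⊆ Icc 0 T := (Icc_subset_Icc_right ht.2).trans hsub
  calc e t ≤ α * t + β * ∫ τ in (0:ℝ)..t, e τ * (1 + e τ ^ p) := hineq t (hsub ht)
    _ ≤ α * t + β * ∫ τ in (0:ℝ)..t, 2 * e τ := by
      gcongr
      exact integral_mul_one_add_rpow_le hp ht.1 (hcont.mono hsub')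
        (fun τ hτ => hnonneg τ (hsub' hτ)) fun τ hτ => hle τ ⟨hτ.1.le, hτ.2.trans_le ht.2⟩
    _ = α * t + 2 * β * ∫ τ in (0:ℝ)..t, e τ := by
      rw [intervalIntegral.integral_const_mul]; ring

theorem stmt_16_general (T α β σ : ℝ) (hα : 0 < α) (hβ : 0 < β) (hσ : 0 < σ)
    (e : ℝ → ℝ) (hcont : ContinuousOn e (Set.Icc 0 T))
    (hnonneg : ∀ t ∈ Set.Icc (0:ℝ) T, 0 ≤ e t)
    (hineq : ∀ t ∈ Set.Icc (0:ℝ) T,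
      e t ≤ α * t + β * ∫ τ in (0:ℝ)..t, e τ * (1 + e τ ^ (2*σ)))
    (hsmall : α * T * Real.exp (2*β*T) ≤ min ((2*β*T) ^ (-(1/(2*σ)))) 1) :
    ∀ t ∈ Set.Icc (0:ℝ) T, e t ≤ α * t * Real.exp (2*β*t) := by
  have apriori := fun t (ht : t ∈ Icc 0 T) => le_mul_exp_of_forall_Ico_le_one hα.le hβ.le
    (by positivity) hcont hnonneg hineq ht
  have hbootstrap : ∀ t ∈ Icc 0 T, ∀ τ ∈ Ico 0 t, e τ ≤ 1 := by
    refine hcont.forall_Ico_le_of_forall_Ico_le_imp_lt fun x hx hle => ?_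
    calc e x ≤ α * x * exp (2 * β * x) := apriori x (Ico_subset_Icc_self hx) hle
      _ < α * T * exp (2 * β * T) := by
        have := mul_nonneg hα.le hx.1
        gcongr <;> exact hx.2
      _ ≤ 1 := hsmall.trans (min_le_right _ _)
  exact fun t ht => apriori t ht (hbootstrap t ht)

/-- Nonlinear Gronwall bootstrap: if `e(t) ≤ αt + β∫₀^t e(1+e^{2σ})` and the smallness
condition `αT e^{2βT} ≤ min((2βT)^{-1/(2σ)}, 1)` holds, then `e(t) ≤ αt e^{2βt}` on `[0,T]`. -/
theorem stmt_16 (T α β σ : ℝ) (hT : 0 < T) (hα : 0 < α) (hβ : 0 < β) (hσ : 0 < σ)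
    (e : ℝ → ℝ) (hcont : ContinuousOn e (Set.Icc 0 T))
    (hnonneg : ∀ t ∈ Set.Icc (0:ℝ) T, 0 ≤ e t) (h0 : e 0 = 0)
    (hineq : ∀ t ∈ Set.Icc (0:ℝ) T,
      e t ≤ α * t + β * ∫ τ in (0:ℝ)..t, e τ * (1 + e τ ^ (2*σ)))
    (hsmall : α * T * Real.exp (2*β*T) ≤ min ((2*β*T) ^ (-(1/(2*σ)))) 1) :
    ∀ t ∈ Set.Icc (0:ℝ) T, e t ≤ α * t * Real.exp (2*β*t) :=
  stmt_16_general T α β σ hα hβ hσ e hcont hnonneg hineq hsmall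
end
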